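/- Let a > 0 and b ≥ 0 be real numbers. Define smooth functions on ℝ³ by X¹(x) = −2x₂/a, X²(x) = e^{−ax₁}[cos(bx₁)(x₃² − x₂²) − sin(bx₁)·2x₂x₃] + e^{ax₁}cos(bx₁)/a², X³(x) = e^{−ax₁}[−sin(bx₁)(x₃² − x₂²) − cos(bx₁)·2x₂x₃] − e^{ax₁}sin(bx₁)/a², and first-order differential operators L₁ f = ∂f/∂x₁, L₂ f = e^{ax₁}cos(bx₁)·∂f/∂x₂ + e^{ax₁}sin(bx₁)·∂f/∂x₃, L₃ f = −e^{ax₁}sin(bx₁)·∂f/∂x₂ + e^{ax₁}cos(bx₁)·∂f/∂x₃. Define the matrix of functions C by C₁₂ = C₂₁ = a·X² − b·X³, C₁₃ = C₃₁ = b·X² + a·X³, C₂₂ = C₃₃ = −2a·X¹, and all other entries 0. Then for all j, k ∈ {1,2,3} and all x ∈ ℝ³: L_j(X^k)(x) + L_k(X^j)(x) + C_{jk}(x) = 0. (This is the Killing field equation, in the left-invariant orthonormal frame, for the vector field X₁ on the group with triple (a,b,−b), which is isometric to hyperbolic three-space of curvature −a².) -/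

import Mathlib

/-- Partial derivative in the first coordinate of `ℝ³ = ℝ × ℝ × ℝ`. -/
noncomputable def pd1 (f : ℝ × ℝ × ℝ → ℝ) (x : ℝ × ℝ × ℝ) : ℝ := fderiv ℝ f x (1, 0, 0)

/-- Partial derivative in the second coordinate. -/
noncomputable def pd2 (f : ℝ × ℝ × ℝ → ℝ) (x : ℝ × ℝ × ℝ) : ℝ := fderiv ℝ f x (0, 1, 0)

/-- Partial derivative in the third coordinate. -/
noncomputable def pd3 (f : ℝ × ℝ × ℝ → ℝ) (x : ℝ × ℝ × ℝ) : ℝ := fderiv ℝ f x (0, 0, 1)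

/-- The components of the vector field `X₁`:
`X¹ = −2x₂/a`,
`X² = e^{−ax₁}[cos(bx₁)(x₃² − x₂²) − sin(bx₁)·2x₂x₃] + e^{ax₁}cos(bx₁)/a²`,
`X³ = e^{−ax₁}[−sin(bx₁)(x₃² − x₂²) − cos(bx₁)·2x₂x₃] − e^{ax₁}sin(bx₁)/a²`. -/
noncomputable def Xcomp (a b : ℝ) : Fin 3 → ℝ × ℝ × ℝ → ℝ :=
  ![fun x => -2 * x.2.1 / a,
    fun x => Real.exp (-(a * x.1)) *
        (Real.cos (b * x.1) * (x.2.2 ^ 2 - x.2.1 ^ 2) -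
          Real.sin (b * x.1) * (2 * x.2.1 * x.2.2)) +
      Real.exp (a * x.1) * Real.cos (b * x.1) / a ^ 2,
    fun x => Real.exp (-(a * x.1)) *
        (-(Real.sin (b * x.1) * (x.2.2 ^ 2 - x.2.1 ^ 2)) -
          Real.cos (b * x.1) * (2 * x.2.1 * x.2.2)) -
      Real.exp (a * x.1) * Real.sin (b * x.1) / a ^ 2]

/-- The left-invariant frame operators `L₁ = ∂₁`,
`L₂ = e^{ax₁}cos(bx₁) ∂₂ + e^{ax₁}sin(bx₁) ∂₃`,
`L₃ = −e^{ax₁}sin(bx₁) ∂₂ + e^{ax₁}cos(bx₁) ∂₃` for the case `(a, b, −b)`. -/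
noncomputable def Lop (a b : ℝ) : Fin 3 → (ℝ × ℝ × ℝ → ℝ) → ℝ × ℝ × ℝ → ℝ :=
  ![fun f x => pd1 f x,
    fun f x => Real.exp (a * x.1) * Real.cos (b * x.1) * pd2 f x +
      Real.exp (a * x.1) * Real.sin (b * x.1) * pd3 f x,
    fun f x => -(Real.exp (a * x.1) * Real.sin (b * x.1)) * pd2 f x +
      Real.exp (a * x.1) * Real.cos (b * x.1) * pd3 f x]

/-- The correction matrix `C`, with `C₁₂ = C₂₁ = a X² − b X³`, `C₁₃ = C₃₁ = b X² + a X³`,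
`C₂₂ = C₃₃ = −2a X¹`, all other entries `0`. -/
noncomputable def Cmat (a b : ℝ) : Fin 3 → Fin 3 → ℝ × ℝ × ℝ → ℝ :=
  ![![fun _ => 0,
      fun x => a * Xcomp a b 1 x - b * Xcomp a b 2 x,
      fun x => b * Xcomp a b 1 x + a * Xcomp a b 2 x],
    ![fun x => a * Xcomp a b 1 x - b * Xcomp a b 2 x,
      fun x => -2 * a * Xcomp a b 0 x,
      fun _ => 0],
    ![fun x => b * Xcomp a b 1 x + a * Xcomp a b 2 x,
      fun _ => 0,
      fun x => -2 * a * Xcomp a b 0 x]]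

/-!
Write `X² + iX³ = e^{-(a+ib)x₁} (x₃ - ix₂)² + e^{(a-ib)x₁} / a²`. Then `∂₁` multiplies the two
summands by `-(a+ib)` and `a - ib`, while the frame factors `e^{ax₁} e^{±ibx₁}` of `L₂, L₃`
cancel the prefactor of the quadratic summand exactly, so that `L₂(X² + iX³) = -2i(x₃ - ix₂)` and
`L₃(X² + iX³) = 2(x₃ - ix₂)`. Substituting these values of `L_j X^k`, each Killing equation
becomes an algebraic identity.
-/

open Real

theorem fderiv_apply_eq_of_hasDerivAt_comp {E : Type*} [NormedAddCommGroup E] [NormedSpace ℝ E]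
    {f : E → ℝ} {γ : ℝ → E} {v : E} {t : ℝ} {f' : ℝ} (hf : DifferentiableAt ℝ f (γ t))
    (hγ : HasDerivAt γ v t) (h : HasDerivAt (f ∘ γ) f' t) : fderiv ℝ f (γ t) v = f' :=
  (hf.hasFDerivAt.comp_hasDerivAt t hγ).unique h

section PartialDerivatives

variable {f : ℝ × ℝ × ℝ → ℝ} {x : ℝ × ℝ × ℝ} {f' : ℝ}

theorem pd1_eq_of_hasDerivAt (hf : DifferentiableAt ℝ f x)
    (h : HasDerivAt (fun t => f (t, x.2.1, x.2.2)) f' x.1) : pd1 f x = f' :=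
  fderiv_apply_eq_of_hasDerivAt_comp (γ := fun t => (t, x.2.1, x.2.2)) hf
    ((hasDerivAt_id x.1).prodMk (hasDerivAt_const x.1 (x.2.1, x.2.2))) h

theorem pd2_eq_of_hasDerivAt (hf : DifferentiableAt ℝ f x)
    (h : HasDerivAt (fun t => f (x.1, t, x.2.2)) f' x.2.1) : pd2 f x = f' :=
  fderiv_apply_eq_of_hasDerivAt_comp (γ := fun t => (x.1, t, x.2.2)) hf
    ((hasDerivAt_const x.2.1 x.1).prodMk
      ((hasDerivAt_id x.2.1).prodMk (hasDerivAt_const x.2.1 x.2.2))) h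

theorem pd3_eq_of_hasDerivAt (hf : DifferentiableAt ℝ f x)
    (h : HasDerivAt (fun t => f (x.1, x.2.1, t)) f' x.2.2) : pd3 f x = f' :=
  fderiv_apply_eq_of_hasDerivAt_comp (γ := fun t => (x.1, x.2.1, t)) hf
    ((hasDerivAt_const x.2.2 x.1).prodMk
      ((hasDerivAt_const x.2.2 x.2.1).prodMk (hasDerivAt_id x.2.2))) h

end PartialDerivatives

theorem exp_mul_exp_neg (u : ℝ) : exp u * exp (-u) = 1 := by
  rw [← exp_add, add_neg_cancel, exp_zero]

/-- The real part of `t ↦ e^{(μ - ib)t} (p - iq)`; its derivative is the real part of the same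
function times `μ - ib`, and the imaginary part is the same expression for `(-q, p)`. -/
theorem hasDerivAt_exp_mul_cos_sub_sin (μ b p q t : ℝ) :
    HasDerivAt (fun t => exp (μ * t) * (p * cos (b * t) - q * sin (b * t)))
      (μ * (exp (μ * t) * (p * cos (b * t) - q * sin (b * t))) +
        b * (exp (μ * t) * (-q * cos (b * t) - p * sin (b * t)))) t := by
  have hμ : HasDerivAt (fun t => μ * t) μ t := by simpa using (hasDerivAt_id t).const_mul μ
  have hb : HasDerivAt (fun t => b * t) b t := by simpa using (hasDerivAt_id t).const_mul b
  exact (hμ.exp.mul ((hb.cos.const_mul p).sub (hb.sin.const_mul q))).congr_deriv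
    (by simp only [Pi.sub_apply]; ring)

theorem hasDerivAt_mul_sq_sub_sq_sub_mul_fst (p q y z : ℝ) :
    HasDerivAt (fun y => p * (z ^ 2 - y ^ 2) - q * (2 * y * z)) (-2 * (p * y + q * z)) y := by
  have h := (((hasDerivAt_const y (z ^ 2)).sub (hasDerivAt_pow 2 y)).const_mul p).sub
    (((hasDerivAt_id y).const_mul (2 : ℝ)).mul_const z |>.const_mul q)
  exact h.congr_deriv (by simp only [Nat.cast_ofNat]; ring)

theorem hasDerivAt_mul_sq_sub_sq_sub_mul_snd (p q y z : ℝ) :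
    HasDerivAt (fun z => p * (z ^ 2 - y ^ 2) - q * (2 * y * z)) (2 * (p * z - q * y)) z := by
  have h := (((hasDerivAt_pow 2 z).sub (hasDerivAt_const z (y ^ 2))).const_mul p).sub
    (((hasDerivAt_id z).const_mul (2 * y)).const_mul q)
  exact h.congr_deriv (by simp only [Nat.cast_ofNat]; ring)

section KillingField

variable (a b : ℝ) (x : ℝ × ℝ × ℝ)

theorem Xcomp_zero_apply : Xcomp a b 0 x = -2 * x.2.1 / a := rfl

theorem differentiableAt_Xcomp (k : Fin 3) : DifferentiableAt ℝ (Xcomp a b k) x := by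
  fin_cases k <;> simp only [Xcomp, Fin.zero_eta, Fin.mk_one, Fin.reduceFinMk, Matrix.cons_val] <;>
    fun_prop

theorem Lop_one_apply (f : ℝ × ℝ × ℝ → ℝ) : Lop a b 1 f x =
    exp (a * x.1) * cos (b * x.1) * pd2 f x + exp (a * x.1) * sin (b * x.1) * pd3 f x := rfl

theorem Lop_two_apply (f : ℝ × ℝ × ℝ → ℝ) : Lop a b 2 f x =
    -(exp (a * x.1) * sin (b * x.1)) * pd2 f x + exp (a * x.1) * cos (b * x.1) * pd3 f x := rfl

theorem pd2_Xcomp_zero : pd2 (Xcomp a b 0) x = -2 / a :=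
  pd2_eq_of_hasDerivAt (differentiableAt_Xcomp a b x 0)
    ((((hasDerivAt_id x.2.1).const_mul (-2)).div_const a).congr_deriv (by ring))

theorem pd3_Xcomp_zero : pd3 (Xcomp a b 0) x = 0 :=
  pd3_eq_of_hasDerivAt (differentiableAt_Xcomp a b x 0) (hasDerivAt_const x.2.2 (-2 * x.2.1 / a))

theorem pd2_Xcomp_one :
    pd2 (Xcomp a b 1) x =
      exp (-(a * x.1)) * (-2 * (cos (b * x.1) * x.2.1 + sin (b * x.1) * x.2.2)) :=
  pd2_eq_of_hasDerivAt (differentiableAt_Xcomp a b x 1)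
    (((hasDerivAt_mul_sq_sub_sq_sub_mul_fst (cos (b * x.1)) (sin (b * x.1)) x.2.1 x.2.2).const_mul
      (exp (-(a * x.1)))).add_const (exp (a * x.1) * cos (b * x.1) / a ^ 2))

theorem pd3_Xcomp_one :
    pd3 (Xcomp a b 1) x =
      exp (-(a * x.1)) * (2 * (cos (b * x.1) * x.2.2 - sin (b * x.1) * x.2.1)) :=
  pd3_eq_of_hasDerivAt (differentiableAt_Xcomp a b x 1)
    (((hasDerivAt_mul_sq_sub_sq_sub_mul_snd (cos (b * x.1)) (sin (b * x.1)) x.2.1 x.2.2).const_mul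
      (exp (-(a * x.1)))).add_const (exp (a * x.1) * cos (b * x.1) / a ^ 2))

theorem pd2_Xcomp_two :
    pd2 (Xcomp a b 2) x =
      exp (-(a * x.1)) * (2 * (sin (b * x.1) * x.2.1 - cos (b * x.1) * x.2.2)) := by
  refine pd2_eq_of_hasDerivAt (differentiableAt_Xcomp a b x 2)
    ((((hasDerivAt_mul_sq_sub_sq_sub_mul_fst (-sin (b * x.1)) (cos (b * x.1)) x.2.1 x.2.2).const_mul
      (exp (-(a * x.1)))).sub_const (exp (a * x.1) * sin (b * x.1) / a ^ 2)).congr_of_eventuallyEq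
      (.of_forall fun t => ?_) |>.congr_deriv ?_)
  · simp only [Xcomp, Matrix.cons_val, neg_mul]
  · ring

theorem pd3_Xcomp_two :
    pd3 (Xcomp a b 2) x =
      exp (-(a * x.1)) * (-2 * (sin (b * x.1) * x.2.2 + cos (b * x.1) * x.2.1)) := by
  refine pd3_eq_of_hasDerivAt (differentiableAt_Xcomp a b x 2)
    ((((hasDerivAt_mul_sq_sub_sq_sub_mul_snd (-sin (b * x.1)) (cos (b * x.1)) x.2.1 x.2.2).const_mul
      (exp (-(a * x.1)))).sub_const (exp (a * x.1) * sin (b * x.1) / a ^ 2)).congr_of_eventuallyEq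
      (.of_forall fun t => ?_) |>.congr_deriv ?_)
  · simp only [Xcomp, Matrix.cons_val, neg_mul]
  · ring

theorem Lop_one_Xcomp_zero :
    Lop a b 1 (Xcomp a b 0) x = -2 * exp (a * x.1) * cos (b * x.1) / a := by
  rw [Lop_one_apply, pd2_Xcomp_zero, pd3_Xcomp_zero]
  ring

theorem Lop_two_Xcomp_zero :
    Lop a b 2 (Xcomp a b 0) x = 2 * exp (a * x.1) * sin (b * x.1) / a := by
  rw [Lop_two_apply, pd2_Xcomp_zero, pd3_Xcomp_zero]
  ring

theorem Lop_one_Xcomp_one : Lop a b 1 (Xcomp a b 1) x = -2 * x.2.1 := by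
  rw [Lop_one_apply, pd2_Xcomp_one, pd3_Xcomp_one]
  linear_combination
    (-2 * x.2.1 * (sin (b * x.1) ^ 2 + cos (b * x.1) ^ 2)) * exp_mul_exp_neg (a * x.1) +
      (-2 * x.2.1) * sin_sq_add_cos_sq (b * x.1)

theorem Lop_two_Xcomp_one : Lop a b 2 (Xcomp a b 1) x = 2 * x.2.2 := by
  rw [Lop_two_apply, pd2_Xcomp_one, pd3_Xcomp_one]
  linear_combination
    (2 * x.2.2 * (sin (b * x.1) ^ 2 + cos (b * x.1) ^ 2)) * exp_mul_exp_neg (a * x.1) +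
      (2 * x.2.2) * sin_sq_add_cos_sq (b * x.1)

theorem Lop_one_Xcomp_two : Lop a b 1 (Xcomp a b 2) x = -2 * x.2.2 := by
  rw [Lop_one_apply, pd2_Xcomp_two, pd3_Xcomp_two]
  linear_combination
    (-2 * x.2.2 * (sin (b * x.1) ^ 2 + cos (b * x.1) ^ 2)) * exp_mul_exp_neg (a * x.1) +
      (-2 * x.2.2) * sin_sq_add_cos_sq (b * x.1)

theorem Lop_two_Xcomp_two : Lop a b 2 (Xcomp a b 2) x = -2 * x.2.1 := by
  rw [Lop_two_apply, pd2_Xcomp_two, pd3_Xcomp_two]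
  linear_combination
    (-2 * x.2.1 * (sin (b * x.1) ^ 2 + cos (b * x.1) ^ 2)) * exp_mul_exp_neg (a * x.1) +
      (-2 * x.2.1) * sin_sq_add_cos_sq (b * x.1)

theorem Lop_zero_Xcomp_zero : Lop a b 0 (Xcomp a b 0) x = 0 :=
  pd1_eq_of_hasDerivAt (differentiableAt_Xcomp a b x 0) (hasDerivAt_const x.1 (-2 * x.2.1 / a))

theorem Lop_zero_Xcomp_one (ha : a ≠ 0) : Lop a b 0 (Xcomp a b 1) x =
    -a * Xcomp a b 1 x + b * Xcomp a b 2 x + 2 * exp (a * x.1) * cos (b * x.1) / a := by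
  apply pd1_eq_of_hasDerivAt (differentiableAt_Xcomp a b x 1)
  refine (((hasDerivAt_exp_mul_cos_sub_sin (-a) b (x.2.2 ^ 2 - x.2.1 ^ 2) (2 * x.2.1 * x.2.2)
    x.1).add (hasDerivAt_exp_mul_cos_sub_sin a b (1 / a ^ 2) 0 x.1)).congr_of_eventuallyEq
      (.of_forall fun t => ?_)).congr_deriv ?_
  · simp only [Xcomp, Matrix.cons_val, neg_mul, Pi.add_apply]
    ring
  · simp only [Xcomp, Matrix.cons_val, neg_mul]
    field_simp
    ring

theorem Lop_zero_Xcomp_two (ha : a ≠ 0) : Lop a b 0 (Xcomp a b 2) x =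
    -a * Xcomp a b 2 x - b * Xcomp a b 1 x - 2 * exp (a * x.1) * sin (b * x.1) / a := by
  apply pd1_eq_of_hasDerivAt (differentiableAt_Xcomp a b x 2)
  refine (((hasDerivAt_exp_mul_cos_sub_sin (-a) b (-(2 * x.2.1 * x.2.2)) (x.2.2 ^ 2 - x.2.1 ^ 2)
    x.1).add (hasDerivAt_exp_mul_cos_sub_sin a b 0 (1 / a ^ 2) x.1)).congr_of_eventuallyEq
      (.of_forall fun t => ?_)).congr_deriv ?_
  · simp only [Xcomp, Matrix.cons_val, neg_mul, Pi.add_apply]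
    ring
  · simp only [Xcomp, Matrix.cons_val, neg_mul]
    field_simp
    ring

end KillingField

theorem hyperbolic_killing_general (a b : ℝ) (ha : 0 < a) :
    ∀ (j k : Fin 3) (x : ℝ × ℝ × ℝ),
      Lop a b j (Xcomp a b k) x + Lop a b k (Xcomp a b j) x + Cmat a b j k x = 0 := by
  intro j k x
  have ha₀ : a ≠ 0 := ha.ne'
  fin_cases j <;> fin_cases k <;>
    simp only [Fin.zero_eta, Fin.mk_one, Fin.reduceFinMk, Cmat, Matrix.cons_val, Xcomp_zero_apply,
      Lop_zero_Xcomp_zero, Lop_one_Xcomp_zero, Lop_two_Xcomp_zero, Lop_zero_Xcomp_one a b x ha₀,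
      Lop_one_Xcomp_one, Lop_two_Xcomp_one, Lop_zero_Xcomp_two a b x ha₀, Lop_one_Xcomp_two,
      Lop_two_Xcomp_two] <;>
    field_simp <;> ring

/-- The Killing field equation for the vector field `X₁` on the group with triple
`(a, b, −b)`, which is isometric to hyperbolic three-space of curvature `−a²`. -/
theorem hyperbolic_killing (a b : ℝ) (ha : 0 < a) (hb : 0 ≤ b) :
    ∀ (j k : Fin 3) (x : ℝ × ℝ × ℝ),
      Lop a b j (Xcomp a b k) x + Lop a b k (Xcomp a b j) x + Cmat a b j k x = 0 :=
  hyperbolic_killing_general a b ha
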